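/- Let (X,d) be a metric space with bounded local complexity and μ a probability measure on X. Then limsup_{r→0} (log Σ_{p=1}^{k(r)} (∫ 𝟙_{p,r} dμ)²)/(log r) = D̄₂(μ) and liminf_{r→0} (log Σ_{p=1}^{k(r)} (∫ 𝟙_{p,r} dμ)²)/(log r) = D̲₂(μ). In particular, for any ε > 0 there is r₀ > 0 such that for all 0 < r < r₀, r^{D̄₂(μ)+ε} ≤ Σ_{p=1}^{k(r)} (∫ 𝟙_{p,r} dμ)² ≤ r^{D̲₂(μ)−ε}. -/

import Mathlib

/-!
Write `I(r) = ∫ μ(B(x, r)) dμ(x)` and `S(r) = ∑ₚ μ(B(xₚʳ, 2r))²`. Since the balls `B(xₚʳ, r)`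
cover `X`, `I(r) ≤ S(r)`; since every point lies in at most `C₀` of the balls `B(xₚʳ, 2r)`,
`S(r) ≤ C₀ I(4r)`. Hence `log S(r) / log r` is squeezed between `log I(r) / log r` and
`log I(4r) / log r + o(1)`, and the substitution `r ↦ 4r` changes neither the limsup nor the
liminf at `0⁺`. The `o(1)` requires `log I(r) / log r` to stay bounded, i.e. `I(r) ≥ c rᴹ`:
by Cauchy–Schwarz `1 ≤ k(r/4) S(r/4) ≤ C₀ k(r/4) I(r)`, and `k` grows at most polynomially in
`1/r` because `k(r) ≤ C₀ k(2r)` and `X`, covered by finitely many unit balls, is bounded.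
-/

open MeasureTheory Filter Topology

/-- The upper correlation dimension `D̄₂(μ)`. -/
noncomputable def corrUpper {X : Type*} [MetricSpace X] [MeasurableSpace X]
    (μ : Measure X) : ℝ :=
  Filter.limsup
    (fun r : ℝ => Real.log (∫ x, (μ (Metric.ball x r)).toReal ∂μ) / Real.log r)
    (nhdsWithin 0 (Set.Ioi 0))

/-- The lower correlation dimension `D̲₂(μ)`. -/
noncomputable def corrLower {X : Type*} [MetricSpace X] [MeasurableSpace X]
    (μ : Measure X) : ℝ :=
  Filter.liminf
    (fun r : ℝ => Real.log (∫ x, (μ (Metric.ball x r)).toReal ∂μ) / Real.log r)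
    (nhdsWithin 0 (Set.Ioi 0))

open Metric Finset

namespace Filter

variable {α : Type*} {l : Filter α} {u v w : α → ℝ}

lemma isBoundedUnder_abs_of_le_of_le (hu : IsBoundedUnder (· ≥ ·) l u)
    (hw : IsBoundedUnder (· ≤ ·) l w) (huv : u ≤ᶠ[l] v) (hvw : v ≤ᶠ[l] w) :
    IsBoundedUnder (· ≤ ·) l fun a => |v a| :=
  isBoundedUnder_le_abs.2 ⟨hw.mono_le hvw, hu.mono_ge huv⟩

lemma limsup_eq_of_le_of_le [NeBot l] (hu : IsBoundedUnder (· ≥ ·) l u)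
    (hw : IsBoundedUnder (· ≤ ·) l w) (huv : u ≤ᶠ[l] v) (hvw : v ≤ᶠ[l] w)
    (h : limsup u l = limsup w l) : limsup v l = limsup w l :=
  le_antisymm (limsup_le_limsup hvw (hu.mono_ge huv).isCoboundedUnder_le hw)
    (h ▸ limsup_le_limsup huv hu.isCoboundedUnder_le (hw.mono_le hvw))

lemma liminf_eq_of_le_of_le [NeBot l] (hu : IsBoundedUnder (· ≥ ·) l u)
    (hw : IsBoundedUnder (· ≤ ·) l w) (huv : u ≤ᶠ[l] v) (hvw : v ≤ᶠ[l] w)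
    (h : liminf u l = liminf w l) : liminf v l = liminf w l :=
  le_antisymm (liminf_le_liminf hvw (hu.mono_ge huv) hw.isCoboundedUnder_ge)
    (h ▸ liminf_le_liminf huv hu (hw.mono_le hvw).isCoboundedUnder_ge)

lemma limsup_add_of_tendsto_zero [NeBot l] (hu : IsBoundedUnder (· ≤ ·) l fun a => |u a|)
    (hv : Tendsto v l (𝓝 0)) : limsup (u + v) l = limsup u l := by
  rw [isBoundedUnder_le_abs] at hu
  have hv' := isBoundedUnder_le_abs.1 hv.norm.isBoundedUnder_le
  refine le_antisymm ?_ ?_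
  · simpa [hv.limsup_eq] using limsup_add_le hu.2 hu.1 hv'.2.isCoboundedUnder_le hv'.1
  · simpa [hv.liminf_eq] using le_limsup_add hu.1 hu.2.isCoboundedUnder_le hv'.1 hv'.2

lemma liminf_add_of_tendsto_zero [NeBot l] (hu : IsBoundedUnder (· ≤ ·) l fun a => |u a|)
    (hv : Tendsto v l (𝓝 0)) : liminf (u + v) l = liminf u l := by
  rw [isBoundedUnder_le_abs] at hu
  have hv' := isBoundedUnder_le_abs.1 hv.norm.isBoundedUnder_le
  refine le_antisymm ?_ ?_
  · rw [add_comm u v]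
    simpa [hv.limsup_eq] using liminf_add_le hv'.2 hv'.1 hu.2 hu.1.isCoboundedUnder_ge
  · simpa [hv.liminf_eq] using le_liminf_add hu.2 hu.1 hv'.2 hv'.1.isCoboundedUnder_ge

end Filter

noncomputable def logRatio (f : ℝ → ℝ) (r : ℝ) : ℝ := Real.log (f r) / Real.log r

section LogRatio

open Real

lemma map_const_mul_nhdsGT_zero {c : ℝ} (hc : 0 < c) : map (c * ·) (𝓝[>] 0) = 𝓝[>] 0 := by
  conv_lhs => rw [← comap_mulLeft_nhdsGT_zero hc]
  exact map_comap_of_surjective (mul_left_surjective₀ hc.ne') _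

lemma limsup_comp_const_mul_nhdsGT_zero {c : ℝ} (hc : 0 < c) (g : ℝ → ℝ) :
    limsup (fun r => g (c * r)) (𝓝[>] 0) = limsup g (𝓝[>] 0) := by
  conv_rhs => rw [← map_const_mul_nhdsGT_zero hc]
  exact limsup_comp g (c * ·) _

lemma liminf_comp_const_mul_nhdsGT_zero {c : ℝ} (hc : 0 < c) (g : ℝ → ℝ) :
    liminf (fun r => g (c * r)) (𝓝[>] 0) = liminf g (𝓝[>] 0) := by
  conv_rhs => rw [← map_const_mul_nhdsGT_zero hc]
  exact liminf_comp g (c * ·) _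

lemma Filter.IsBoundedUnder.comp_const_mul_nhdsGT_zero {c : ℝ} (hc : 0 < c) {g : ℝ → ℝ}
    (hg : IsBoundedUnder (· ≤ ·) (𝓝[>] 0) g) :
    IsBoundedUnder (· ≤ ·) (𝓝[>] 0) fun r => g (c * r) := by
  rw [← map_const_mul_nhdsGT_zero hc] at hg
  simpa [IsBoundedUnder, Filter.map_map, Function.comp_def] using hg

lemma tendsto_inv_log_nhdsGT_zero : Tendsto (fun r => (log r)⁻¹) (𝓝[>] 0) (𝓝 0) :=
  tendsto_inv_atBot_zero.comp tendsto_log_nhdsGT_zero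

lemma isBoundedUnder_abs_logRatio {f : ℝ → ℝ} {c C M : ℝ} (hc : 0 < c)
    (hlow : ∀ᶠ r in 𝓝[>] 0, c * r ^ M ≤ f r) (hup : ∀ᶠ r in 𝓝[>] 0, f r ≤ C) :
    IsBoundedUnder (· ≤ ·) (𝓝[>] 0) fun r => |logRatio f r| := by
  have hlowlim : Tendsto (fun r => log C * (log r)⁻¹) (𝓝[>] 0) (𝓝 0) := by
    simpa using tendsto_inv_log_nhdsGT_zero.const_mul (log C)
  have huplim : Tendsto (fun r => M + log c * (log r)⁻¹) (𝓝[>] 0) (𝓝 M) := by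
    simpa using (tendsto_inv_log_nhdsGT_zero.const_mul (log c)).const_add M
  rw [isBoundedUnder_le_abs]
  constructor
  · refine huplim.isBoundedUnder_le.mono_le ?_
    filter_upwards [hlow, Ioo_mem_nhdsGT one_pos] with r hr ⟨hr0, hr1⟩
    have hlogr : log r < 0 := log_neg hr0 hr1
    have : log c + M * log r ≤ log (f r) := by
      rw [← log_rpow hr0, ← log_mul hc.ne' (rpow_pos_of_pos hr0 M).ne']
      exact log_le_log (by positivity) hr
    rw [logRatio, div_le_iff_of_neg hlogr, add_mul, mul_assoc, inv_mul_cancel₀ hlogr.ne]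
    linarith
  · refine hlowlim.isBoundedUnder_ge.mono_ge ?_
    filter_upwards [hlow, hup, Ioo_mem_nhdsGT one_pos] with r hr hr' ⟨hr0, hr1⟩
    rw [logRatio, ← div_eq_mul_inv]
    exact div_le_div_of_nonpos_of_le (log_neg hr0 hr1).le
      (log_le_log ((by positivity : 0 < c * r ^ M).trans_le hr) hr')

theorem logRatio_squeeze {f F : ℝ → ℝ} {C c : ℝ} (hC : 0 < C) (hc : 0 < c)
    (hpos : ∀ᶠ r in 𝓝[>] 0, 0 < f r)
    (hbdd : IsBoundedUnder (· ≤ ·) (𝓝[>] 0) fun r => |logRatio f r|)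
    (hle : ∀ᶠ r in 𝓝[>] 0, f r ≤ F r)
    (hge : ∀ᶠ r in 𝓝[>] 0, F r ≤ C * f (c * r)) :
    (IsBoundedUnder (· ≤ ·) (𝓝[>] 0) fun r => |logRatio F r|) ∧
      limsup (logRatio F) (𝓝[>] 0) = limsup (logRatio f) (𝓝[>] 0) ∧
      liminf (logRatio F) (𝓝[>] 0) = liminf (logRatio f) (𝓝[>] 0) := by
  set g := fun r => logRatio f (c * r) with hg_def
  set δ := fun r => (log C + log c * g r) * (log r)⁻¹ with hδ_def
  have hg : IsBoundedUnder (· ≤ ·) (𝓝[>] 0) fun r => |g r| :=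
    hbdd.comp_const_mul_nhdsGT_zero hc
  have hδ : Tendsto δ (𝓝[>] 0) (𝓝 0) := by
    simpa [hδ_def, add_mul, mul_assoc] using
      (tendsto_inv_log_nhdsGT_zero.const_mul (log C)).add
        ((isBoundedUnder_le_mul_tendsto_zero hg tendsto_inv_log_nhdsGT_zero).const_mul (log c))
  have hbdd' := isBoundedUnder_le_abs.1 hbdd
  have hg' := isBoundedUnder_le_abs.1 hg
  have hgδ : IsBoundedUnder (· ≥ ·) (𝓝[>] 0) (g + δ) :=
    isBoundedUnder_ge_add hg'.2 (isBoundedUnder_le_abs.1 hδ.norm.isBoundedUnder_le).2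
  have hupper : logRatio F ≤ᶠ[𝓝[>] 0] logRatio f := by
    filter_upwards [hpos, hle, Ioo_mem_nhdsGT one_pos] with r hfr hFr ⟨hr0, hr1⟩
    exact div_le_div_of_nonpos_of_le (log_neg hr0 hr1).le (log_le_log hfr hFr)
  have hlower : g + δ ≤ᶠ[𝓝[>] 0] logRatio F := by
    filter_upwards [hpos, hle, hge, Ioo_mem_nhdsGT one_pos,
      eventually_nhdsGT_zero_mul_left hc hpos,
      eventually_nhdsGT_zero_mul_left hc (Ioo_mem_nhdsGT one_pos)]
      with r hfr hFr hFr' ⟨hr0, hr1⟩ hfcr ⟨_, hcr1⟩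
    have hlogr : log r < 0 := log_neg hr0 hr1
    have hlogcr : log (c * r) < 0 := log_neg (by positivity) hcr1
    have hfcr_eq : log (f (c * r)) = g r * log (c * r) := by
      simp only [hg_def, logRatio, div_mul_cancel₀ _ hlogcr.ne]
    have hF : log (F r) ≤ log C + log (f (c * r)) := by
      rw [← log_mul hC.ne' hfcr.ne']
      exact log_le_log (hfr.trans_le hFr) hFr'
    calc (g + δ) r = (log C + log (f (c * r))) / log r := by
          rw [hfcr_eq, log_mul hc.ne' hr0.ne']
          simp only [Pi.add_apply, hδ_def]
          field_simp [hlogr.ne]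
          ring
      _ ≤ logRatio F r := div_le_div_of_nonpos_of_le hlogr.le hF
  refine ⟨isBoundedUnder_abs_of_le_of_le hgδ hbdd'.1 hlower hupper,
    limsup_eq_of_le_of_le hgδ hbdd'.1 hlower hupper ?_,
    liminf_eq_of_le_of_le hgδ hbdd'.1 hlower hupper ?_⟩
  · rw [limsup_add_of_tendsto_zero hg hδ, hg_def, limsup_comp_const_mul_nhdsGT_zero hc]
  · rw [liminf_add_of_tendsto_zero hg hδ, hg_def, liminf_comp_const_mul_nhdsGT_zero hc]

lemma exists_rpow_le_and_le_rpow {F : ℝ → ℝ} (hpos : ∀ᶠ r in 𝓝[>] 0, 0 < F r)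
    (hbdd : IsBoundedUnder (· ≤ ·) (𝓝[>] 0) fun r => |logRatio F r|) {ε : ℝ}
    (hε : 0 < ε) :
    ∃ r₀ > 0, ∀ r : ℝ, 0 < r → r < r₀ →
      r ^ (limsup (logRatio F) (𝓝[>] 0) + ε) ≤ F r ∧
        F r ≤ r ^ (liminf (logRatio F) (𝓝[>] 0) - ε) := by
  have hbdd' := isBoundedUnder_le_abs.1 hbdd
  have hev : ∀ᶠ r in 𝓝[>] 0, r ^ (limsup (logRatio F) (𝓝[>] 0) + ε) ≤ F r ∧
      F r ≤ r ^ (liminf (logRatio F) (𝓝[>] 0) - ε) := by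
    filter_upwards [hpos, Ioo_mem_nhdsGT one_pos,
      eventually_lt_of_limsup_lt (lt_add_of_pos_right _ hε) hbdd'.1,
      eventually_lt_of_lt_liminf (sub_lt_self _ hε) hbdd'.2] with r hFr ⟨hr0, hr1⟩ hsup hinf
    have hlogr : log r < 0 := log_neg hr0 hr1
    constructor
    · rw [← log_le_log_iff (rpow_pos_of_pos hr0 _) hFr, log_rpow hr0,
        ← div_le_iff_of_neg hlogr]
      exact hsup.le
    · rw [← log_le_log_iff hFr (rpow_pos_of_pos hr0 _), log_rpow hr0,
        ← le_div_iff_of_neg hlogr]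
      exact hinf.le
  obtain ⟨r₀, hr₀, hsub⟩ := mem_nhdsGT_iff_exists_Ioo_subset.1 hev
  exact ⟨r₀, hr₀, fun r hr0 hr => hsub ⟨hr0, hr⟩⟩

end LogRatio

/-- `corrUpper μ` and `corrLower μ` are, by definition, the limsup and liminf at `0⁺` of
`logRatio (correlationIntegral μ)`. -/
noncomputable def correlationIntegral {X : Type*} [MetricSpace X] [MeasurableSpace X]
    (μ : Measure X) (r : ℝ) : ℝ :=
  ∫ x, (μ (ball x r)).toReal ∂μ

noncomputable def ballSumSq {X ι : Type*} [MetricSpace X] [MeasurableSpace X] [Fintype ι]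
    (μ : Measure X) (y : ι → X) (ρ : ℝ) : ℝ :=
  ∑ i, (μ (ball (y i) ρ)).toReal ^ 2

section BallMeasures

variable {X ι : Type*} [MetricSpace X] [MeasurableSpace X] [Fintype ι] (μ : Measure X)

lemma lowerSemicontinuous_measure_ball (r : ℝ) : LowerSemicontinuous fun x => μ (ball x r) := by
  intro x c (hc : c < μ (ball x r))
  have hunion : ball x r = ⋃ n : ℕ, ball x (r - 1 / (n + 1)) := by
    ext z
    simp only [mem_ball, Set.mem_iUnion]
    refine ⟨fun hz => ?_, fun ⟨n, hn⟩ =>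
      hn.trans_le (sub_le_self r Nat.one_div_pos_of_nat.le)⟩
    obtain ⟨n, hn⟩ := exists_nat_one_div_lt (sub_pos.2 hz)
    exact ⟨n, lt_sub_comm.1 hn⟩
  have hmono : Monotone fun n : ℕ => ball x (r - 1 / (n + 1)) := fun n m hnm =>
    ball_subset_ball (sub_le_sub_left (Nat.one_div_le_one_div hnm) r)
  rw [hunion, hmono.measure_iUnion] at hc
  obtain ⟨n, hn⟩ := lt_iSup_iff.1 hc
  filter_upwards [ball_mem_nhds x Nat.one_div_pos_of_nat] with y hy
  refine hn.trans_le (measure_mono (ball_subset_ball' ?_))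
  rw [dist_comm, sub_add_eq_add_sub, sub_le_iff_le_add, add_le_add_iff_left]
  exact (mem_ball.1 hy).le

lemma one_le_card_mul_ballSumSq [IsProbabilityMeasure μ] {y : ι → X} {ρ : ℝ}
    (hcover : ∀ x, ∃ i, dist x (y i) < ρ) : 1 ≤ Fintype.card ι * ballSumSq μ y ρ := by
  have hsum : 1 ≤ ∑ i, μ.real (ball (y i) ρ) := by
    have hsub : (Set.univ : Set X) ⊆ ⋃ i, ball (y i) ρ := fun x _ =>
      Set.mem_iUnion.2 (hcover x)
    calc 1 = μ.real Set.univ := probReal_univ.symm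
      _ ≤ μ.real (⋃ i, ball (y i) ρ) := measureReal_mono hsub
      _ ≤ ∑ i, μ.real (ball (y i) ρ) := measureReal_iUnion_fintype_le _
  calc (1 : ℝ) ≤ (∑ i, μ.real (ball (y i) ρ)) ^ 2 := one_le_pow₀ hsum
    _ ≤ Fintype.card ι * ballSumSq μ y ρ := sq_sum_le_card_mul_sum_sq

variable [OpensMeasurableSpace X]

lemma integrable_measure_ball [IsFiniteMeasure μ] (r : ℝ) :
    Integrable (fun x => (μ (ball x r)).toReal) μ :=
  .of_bound (lowerSemicontinuous_measure_ball μ r).measurable.ennreal_toReal.aestronglyMeasurable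
    (μ.real Set.univ) (.of_forall fun x => by
      rw [Real.norm_of_nonneg ENNReal.toReal_nonneg]
      exact measureReal_mono (Set.subset_univ _))

lemma correlationIntegral_le_one [IsProbabilityMeasure μ] (r : ℝ) :
    correlationIntegral μ r ≤ 1 := by
  refine (integral_mono (integrable_measure_ball μ r) (integrable_const (1 : ℝ))
    fun x => measureReal_le_one).trans_eq ?_
  simp

lemma integral_sum_indicator_ball [IsFiniteMeasure μ] (y : ι → X) (ρ : ℝ) (a : ι → ℝ) :
    ∫ x, ∑ i, (ball (y i) ρ).indicator (fun _ => a i) x ∂μ =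
      ∑ i, μ.real (ball (y i) ρ) * a i := by
  rw [integral_finsetSum _ fun i _ => (integrable_const _).indicator measurableSet_ball]
  simp [integral_indicator_const _ measurableSet_ball]

lemma correlationIntegral_le_ballSumSq [IsFiniteMeasure μ] {y : ι → X} {r : ℝ}
    (hcover : ∀ x, ∃ i, dist x (y i) < r) :
    correlationIntegral μ r ≤ ballSumSq μ y (2 * r) := by
  set m : ι → ℝ := fun i => (μ (ball (y i) (2 * r))).toReal
  have hpoint : ∀ x,
      (μ (ball x r)).toReal ≤ ∑ i, (ball (y i) r).indicator (fun _ => m i) x := by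
    intro x
    obtain ⟨i, hi⟩ := hcover x
    calc (μ (ball x r)).toReal ≤ m i := measureReal_mono (ball_subset_ball' (by linarith))
      _ = (ball (y i) r).indicator (fun _ => m i) x :=
        (Set.indicator_of_mem (mem_ball.2 hi) (fun _ => m i)).symm
      _ ≤ ∑ j, (ball (y j) r).indicator (fun _ => m j) x :=
        single_le_sum (f := fun j => (ball (y j) r).indicator (fun _ => m j) x)
          (fun j _ => Set.indicator_nonneg (fun _ _ => ENNReal.toReal_nonneg) x)
          (mem_univ i)
  calc correlationIntegral μ r ≤ ∫ x, ∑ i, (ball (y i) r).indicator (fun _ => m i) x ∂μ :=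
        integral_mono (integrable_measure_ball μ r)
          (integrable_finsetSum _ fun i _ => (integrable_const _).indicator measurableSet_ball)
          hpoint
    _ = ∑ i, μ.real (ball (y i) r) * m i := integral_sum_indicator_ball μ y r m
    _ ≤ ballSumSq μ y (2 * r) := sum_le_sum fun i _ => by
        obtain ⟨j, hj⟩ := hcover (y i)
        rw [sq]
        exact mul_le_mul_of_nonneg_right
          (measureReal_mono (ball_subset_ball (by linarith [dist_nonneg (x := y i) (y := y j)])))
          ENNReal.toReal_nonneg

lemma ballSumSq_le_mul_correlationIntegral [IsFiniteMeasure μ] {y : ι → X} {ρ : ℝ} {C : ℕ}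
    (hmult : ∀ x, #{i | dist x (y i) < ρ} ≤ C) :
    ballSumSq μ y ρ ≤ C * correlationIntegral μ (2 * ρ) := by
  set m : ι → ℝ := fun i => (μ (ball (y i) ρ)).toReal
  have hpoint : ∀ x, ∑ i, (ball (y i) ρ).indicator (fun _ => m i) x ≤
      C * (μ (ball x (2 * ρ))).toReal := by
    intro x
    calc ∑ i, (ball (y i) ρ).indicator (fun _ => m i) x
        ≤ ∑ i, (ball (y i) ρ).indicator (fun _ => (μ (ball x (2 * ρ))).toReal) x :=
          sum_le_sum fun i _ => Set.indicator_le_indicator' fun hx =>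
            measureReal_mono (ball_subset_ball' (by rw [dist_comm]; linarith [mem_ball.1 hx]))
      _ = #{i | dist x (y i) < ρ} * (μ (ball x (2 * ρ))).toReal := by
          classical
          simp [Set.indicator_apply, mem_ball, sum_ite]
      _ ≤ C * (μ (ball x (2 * ρ))).toReal :=
          mul_le_mul_of_nonneg_right (by exact_mod_cast hmult x) ENNReal.toReal_nonneg
  calc ballSumSq μ y ρ = ∑ i, μ.real (ball (y i) ρ) * m i := by simp only [ballSumSq, sq]; rfl
    _ = ∫ x, ∑ i, (ball (y i) ρ).indicator (fun _ => m i) x ∂μ :=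
        (integral_sum_indicator_ball μ y ρ m).symm
    _ ≤ ∫ x, C * (μ (ball x (2 * ρ))).toReal ∂μ :=
        integral_mono
          (integrable_finsetSum _ fun i _ => (integrable_const _).indicator measurableSet_ball)
          ((integrable_measure_ball μ _).const_mul _) hpoint
    _ = C * correlationIntegral μ (2 * ρ) := integral_const_mul _ _

end BallMeasures

lemma card_le_mul_card_of_forall_exists_dist_lt {X ι κ : Type*} [MetricSpace X] [Fintype ι]
    [Fintype κ] {y : ι → X} {z : κ → X} {ρ : ℝ} {C : ℕ}
    (hz : ∀ i, ∃ j, dist (y i) (z j) < ρ) (hmult : ∀ x, #{i | dist x (y i) < ρ} ≤ C) :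
    Fintype.card ι ≤ C * Fintype.card κ := by
  classical
  choose f hf using hz
  simpa using card_le_mul_card_image_of_maps_to (f := f) (s := univ) (t := univ)
    (fun i _ => mem_univ (f i)) C
    fun j _ => (card_le_card fun i hi => by
      simp only [mem_filter, mem_univ, true_and] at hi ⊢
      rw [← hi, dist_comm]
      exact hf i).trans (hmult (z j))

structure BoundedLocalComplexity {X : Type*} [MetricSpace X] (C₀ : ℕ) (k : ℝ → ℕ)
    (pts : ∀ r : ℝ, Fin (k r) → X) : Prop where
  cover : ∀ r > (0 : ℝ), ∀ x : X, ∃ p : Fin (k r), dist x (pts r p) < r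
  mult : ∀ r > (0 : ℝ), ∀ x : X, #{p | dist x (pts r p) < 2 * r} ≤ C₀

namespace BoundedLocalComplexity

variable {X : Type*} [MetricSpace X] {C₀ : ℕ} {k : ℝ → ℕ}
  {pts : ∀ r : ℝ, Fin (k r) → X}

lemma one_le [Nonempty X] (h : BoundedLocalComplexity C₀ k pts) : 1 ≤ C₀ := by
  obtain ⟨x⟩ := ‹Nonempty X›
  obtain ⟨p, hp⟩ := h.cover 1 one_pos x
  refine (card_pos.2 ⟨p, ?_⟩).trans_le (h.mult 1 one_pos x)
  simp only [mem_filter, mem_univ, true_and]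
  linarith

lemma card_le_mul_card_two_mul (h : BoundedLocalComplexity C₀ k pts) {r : ℝ} (hr : 0 < r) :
    k r ≤ C₀ * k (2 * r) := by
  simpa using card_le_mul_card_of_forall_exists_dist_lt
    (fun p => h.cover (2 * r) (by positivity) (pts r p)) (h.mult r hr)

lemma exists_card_le [Nonempty X] (h : BoundedLocalComplexity C₀ k pts) :
    ∃ R > 0, ∀ s ≥ R, k s ≤ C₀ := by
  obtain ⟨x₀⟩ := ‹Nonempty X›
  have hbdd : Bornology.IsBounded (Set.univ : Set X) :=
    (Bornology.isBounded_iUnion.2 fun p => isBounded_ball).subset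
      fun x _ => Set.mem_iUnion.2 (h.cover 1 one_pos x)
  obtain ⟨R, hR, hsub⟩ := hbdd.subset_ball_lt 0 x₀
  refine ⟨R, hR, fun s hs => ?_⟩
  have hall := h.mult s (hR.trans_le hs) x₀
  rwa [filter_true_of_mem fun p _ => by
    linarith [mem_ball.1 (hsub (Set.mem_univ (pts s p))), dist_comm x₀ (pts s p)],
    card_univ, Fintype.card_fin] at hall

lemma card_le_pow (h : BoundedLocalComplexity C₀ k pts) {R : ℝ} (hR : ∀ s ≥ R, k s ≤ C₀)
    (n : ℕ) {r : ℝ} (hr : 0 < r) (hRr : R ≤ 2 ^ n * r) : k r ≤ C₀ ^ (n + 1) := by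
  induction n generalizing r with
  | zero => simpa using hR r (by simpa using hRr)
  | succ n ih =>
    calc k r ≤ C₀ * k (2 * r) := h.card_le_mul_card_two_mul hr
      _ ≤ C₀ * C₀ ^ (n + 1) :=
        Nat.mul_le_mul_left _ (ih (by positivity) (by rw [pow_succ, mul_assoc] at hRr; exact hRr))
      _ = C₀ ^ (n + 1 + 1) := (pow_succ' _ _).symm

lemma exists_card_le_mul_rpow_neg [Nonempty X] (h : BoundedLocalComplexity C₀ k pts) :
    ∃ A > 0, ∃ M : ℝ, ∀ᶠ r in 𝓝[>] 0, (k r : ℝ) ≤ A * r ^ (-M) := by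
  obtain ⟨R, hR, hkR⟩ := h.exists_card_le
  have hC₀ : (1 : ℝ) ≤ C₀ := by exact_mod_cast h.one_le
  -- each halving of `r` multiplies `k r` by at most `C₀ = 2 ^ M`
  set M := Real.logb 2 C₀
  refine ⟨C₀ ^ 2 * R ^ M, by positivity, M, ?_⟩
  filter_upwards [Ioo_mem_nhdsGT hR] with r ⟨hr0, hrR⟩
  obtain ⟨n, hn, hn'⟩ := exists_nat_pow_near ((one_le_div hr0).2 hrR.le) one_lt_two
  have hk : k r ≤ C₀ ^ (n + 1 + 1) :=
    h.card_le_pow hkR (n + 1) hr0 (by rw [div_lt_iff₀ hr0] at hn'; exact hn'.le)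
  have hpow : (C₀ : ℝ) ^ n ≤ (R / r) ^ M := by
    rw [← Real.rpow_logb two_pos (by norm_num) (by linarith : (0 : ℝ) < C₀),
      ← Real.rpow_mul_natCast two_pos.le, mul_comm, Real.rpow_natCast_mul two_pos.le]
    exact Real.rpow_le_rpow (by positivity) hn (Real.logb_nonneg one_lt_two hC₀)
  calc (k r : ℝ) ≤ (C₀ : ℝ) ^ (n + 1 + 1) := by exact_mod_cast hk
    _ = C₀ ^ 2 * C₀ ^ n := by ring
    _ ≤ C₀ ^ 2 * (R / r) ^ M := by gcongr
    _ = C₀ ^ 2 * R ^ M * r ^ (-M) := by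
      rw [Real.div_rpow hR.le hr0.le, Real.rpow_neg hr0.le, div_eq_mul_inv, mul_assoc]

section Measure

variable [MeasurableSpace X] [OpensMeasurableSpace X]

lemma ballSumSq_le (h : BoundedLocalComplexity C₀ k pts) (μ : Measure X) [IsFiniteMeasure μ]
    {r : ℝ} (hr : 0 < r) :
    ballSumSq μ (pts r) (2 * r) ≤ C₀ * correlationIntegral μ (4 * r) := by
  have := ballSumSq_le_mul_correlationIntegral μ (h.mult r hr)
  rwa [← mul_assoc, show (2 : ℝ) * 2 = 4 by norm_num] at this

lemma exists_mul_rpow_le_correlationIntegral (h : BoundedLocalComplexity C₀ k pts)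
    (μ : Measure X) [IsProbabilityMeasure μ] :
    ∃ c > 0, ∃ M : ℝ, ∀ᶠ r in 𝓝[>] 0, c * r ^ M ≤ correlationIntegral μ r := by
  have := nonempty_of_isProbabilityMeasure μ
  have hC₀ : (0 : ℝ) < C₀ := by exact_mod_cast h.one_le
  obtain ⟨A, hA, M, hk⟩ := h.exists_card_le_mul_rpow_neg
  refine ⟨(C₀ * A * 4 ^ M)⁻¹, by positivity, M, ?_⟩
  filter_upwards [eventually_nhdsGT_zero_mul_left (by norm_num : (0 : ℝ) < 4⁻¹) hk,
    self_mem_nhdsWithin] with r hkr (hr : 0 < r)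
  have hs : 0 < 4⁻¹ * r := by positivity
  have hI := h.ballSumSq_le μ hs
  rw [mul_inv_cancel_left₀ four_ne_zero] at hI
  have hone : 1 ≤ (A * (4⁻¹ * r) ^ (-M)) * (C₀ * correlationIntegral μ r) :=
    calc (1 : ℝ) ≤ k (4⁻¹ * r) * ballSumSq μ (pts (4⁻¹ * r)) (2 * (4⁻¹ * r)) := by
          simpa using one_le_card_mul_ballSumSq μ fun x =>
            (h.cover _ hs x).imp fun p hp => by linarith
      _ ≤ (A * (4⁻¹ * r) ^ (-M)) * (C₀ * correlationIntegral μ r) :=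
          mul_le_mul hkr hI (sum_nonneg fun _ _ => sq_nonneg _) (by positivity)
  rw [inv_mul_le_iff₀ (by positivity)]
  have hrM : 0 < r ^ M := by positivity
  calc r ^ M ≤ r ^ M * ((A * (4⁻¹ * r) ^ (-M)) * (C₀ * correlationIntegral μ r)) :=
        le_mul_of_one_le_right hrM.le hone
    _ = C₀ * A * 4 ^ M * correlationIntegral μ r := by
        rw [Real.mul_rpow (by norm_num) hr.le, Real.rpow_neg hr.le, Real.inv_rpow (by norm_num),
          Real.rpow_neg (by norm_num), inv_inv]
        field_simp

end Measure

end BoundedLocalComplexity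

/-- In a metric space with bounded local complexity, for a probability
measure `μ`, the limsup (resp. liminf) as `r → 0⁺` of
`log ∑_p (∫ 𝟙_{p,r} dμ)² / log r` equals `D̄₂(μ)` (resp. `D̲₂(μ)`); in particular for any
`ε > 0` there is `r₀ > 0` such that
`r^{D̄₂+ε} ≤ ∑_p (∫ 𝟙_{p,r} dμ)² ≤ r^{D̲₂−ε}` for all `0 < r < r₀`. -/
theorem bounded_local_complexity_correlation_sum
    {X : Type*} [MetricSpace X] [MeasurableSpace X] [OpensMeasurableSpace X]
    (μ : Measure X) [IsProbabilityMeasure μ]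
    (C₀ : ℕ) (k : ℝ → ℕ) (pts : ∀ r : ℝ, Fin (k r) → X)
    (hcover : ∀ r > (0 : ℝ), ∀ x : X, ∃ p : Fin (k r), dist x (pts r p) < r)
    (hmult : ∀ r > (0 : ℝ), ∀ x : X,
      ((Finset.univ : Finset (Fin (k r))).filter
        (fun p => dist x (pts r p) < 2 * r)).card ≤ C₀) :
    Filter.limsup
        (fun r : ℝ =>
          Real.log (∑ p : Fin (k r), (μ (Metric.ball (pts r p) (2 * r))).toReal ^ 2) /
            Real.log r)
        (nhdsWithin 0 (Set.Ioi 0)) = corrUpper μ ∧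
    Filter.liminf
        (fun r : ℝ =>
          Real.log (∑ p : Fin (k r), (μ (Metric.ball (pts r p) (2 * r))).toReal ^ 2) /
            Real.log r)
        (nhdsWithin 0 (Set.Ioi 0)) = corrLower μ ∧
    ∀ ε > (0 : ℝ), ∃ r₀ > (0 : ℝ), ∀ r : ℝ, 0 < r → r < r₀ →
      r ^ (corrUpper μ + ε) ≤
          (∑ p : Fin (k r), (μ (Metric.ball (pts r p) (2 * r))).toReal ^ 2) ∧
        (∑ p : Fin (k r), (μ (Metric.ball (pts r p) (2 * r))).toReal ^ 2) ≤
          r ^ (corrLower μ - ε) := by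
  have h : BoundedLocalComplexity C₀ k pts := ⟨hcover, hmult⟩
  have : Nonempty X := nonempty_of_isProbabilityMeasure μ
  obtain ⟨c, hc, M, hlow⟩ := h.exists_mul_rpow_le_correlationIntegral μ
  have hIpos : ∀ᶠ r in 𝓝[>] 0, 0 < correlationIntegral μ r := by
    filter_upwards [hlow, self_mem_nhdsWithin] with r hr (hr0 : 0 < r)
    exact (by positivity : 0 < c * r ^ M).trans_le hr
  have hle : ∀ᶠ r in 𝓝[>] 0, correlationIntegral μ r ≤ ballSumSq μ (pts r) (2 * r) :=
    eventually_mem_nhdsWithin.mono fun r hr => correlationIntegral_le_ballSumSq μ (hcover r hr)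
  obtain ⟨hbdd, hsup, hinf⟩ := logRatio_squeeze (by exact_mod_cast h.one_le) four_pos hIpos
    (isBoundedUnder_abs_logRatio hc hlow (.of_forall (correlationIntegral_le_one μ))) hle
    (eventually_mem_nhdsWithin.mono fun r hr => h.ballSumSq_le μ hr)
  refine ⟨hsup, hinf, fun ε hε => ?_⟩
  have hSpos := (hIpos.and hle).mono fun r hr => hr.1.trans_le hr.2
  have key := exists_rpow_le_and_le_rpow hSpos hbdd hε
  rw [hsup, hinf] at key
  exact key
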